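/- arXiv:0807.1036 — 2 statements merged into one kernel-verified Lean document; each statement's English description precedes it below -/
import Mathlib

section
/- Let (Ω, ℱ, ℙ) be a probability space, T > 0, and ω ↦ M_ω a measurable family of finite atomless Borel measures on [0,T], inducing pseudometrics d_ω(x,y) = M_ω([min(x,y), max(x,y)]). Let K ⊆ [0,T] be Borel and q ∈ (0,1]. Suppose there is a measurable family ω ↦ ν_ω of finite Borel measures on [0,T] such that ℙ-almost surely ν_ω([0,T] \ K) = 0 and ν_ω([0,T]) > 0, and such that ∫_Ω ( ∫_{[0,T]×[0,T]} d_ω(x,y)^{−q} ν_ω(dx) ν_ω(dy) ) ℙ(dω) < ∞. Then ℙ-almost surely the Hausdorff dimension of K with respect to d_ω is at least q. -/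
open MeasureTheory
open scoped ENNReal

/-- The `t`-dimensional Hausdorff content of `K` with respect to a pseudometric `d`:
the infimum of `∑ᵢ rᵢ^t` over countable covers of `K` by `d`-balls of radii `rᵢ > 0`. -/
noncomputable def hContentWith {X : Type*} (d : X → X → ℝ) (t : ℝ) (K : Set X) : ℝ≥0∞ :=
  ⨅ (c : ℕ → X) (r : ℕ → ℝ)
    (_ : (∀ n, 0 < r n) ∧ K ⊆ ⋃ n, {y | d (c n) y < r n}),
    ∑' n, ENNReal.ofReal (r n ^ t)

/-- The Hausdorff dimension of `K` with respect to a pseudometric `d`: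
`inf {t ≥ 0 : C^t(K) = 0}`. -/
noncomputable def dimWith {X : Type*} (d : X → X → ℝ) (K : Set X) : ℝ :=
  sInf {t : ℝ | 0 ≤ t ∧ hContentWith d t K = 0}

/-!
Outside a `ℙ`-null set the energy of `ν_ω` is finite, since it is measurable in `ω` and has
finite expectation. Then the potential `φ(x) = ∫ d_ω(x, y)^(-q) dν_ω(y)` is `ν_ω`-integrable, so
some sublevel set `S = {φ ≤ n}` carries positive `ν_ω`-mass of `K`. On `S` every ball satisfies
`ν_ω(B(c, r) ∩ S) ≤ n (2r)^q`, and the mass distribution principle gives `C^q(K) > 0`, hence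
`C^t(K) > 0` for all `t < q`. The infimum defining the dimension is over a nonempty set because
`C^2(K) = 0`: `d_ω(x, y) = |F(x) - F(y)|` for the distribution function `F` of `M_ω`, so `K` is
covered by `N` balls of radius about `M_ω(ℝ) / N`.
-/

section HausdorffContent

variable {X : Type*} {d : X → X → ℝ} {K : Set X}

theorem hContentWith_le {t : ℝ} {c : ℕ → X} {r : ℕ → ℝ} (hr : ∀ n, 0 < r n)
    (hcov : K ⊆ ⋃ n, {y | d (c n) y < r n}) :
    hContentWith d t K ≤ ∑' n, ENNReal.ofReal (r n ^ t) :=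
  iInf₂_le_of_le c r (iInf_le_of_le ⟨hr, hcov⟩ le_rfl)

theorem exists_cover_of_hContentWith_lt {t : ℝ} {a : ℝ≥0∞} (h : hContentWith d t K < a) :
    ∃ (c : ℕ → X) (r : ℕ → ℝ), (∀ n, 0 < r n) ∧ K ⊆ ⋃ n, {y | d (c n) y < r n} ∧
      ∑' n, ENNReal.ofReal (r n ^ t) < a := by
  simpa only [hContentWith, iInf_lt_iff, exists_prop, and_assoc] using h

/-- A cover with `∑ rₙ^t < 1` has all radii `< 1`, hence `∑ rₙ^s ≤ ∑ rₙ^t` for `s ≥ t`. -/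
theorem hContentWith_eq_zero_of_le {t s : ℝ} (ht : 0 ≤ t) (hts : t ≤ s)
    (h : hContentWith d t K = 0) : hContentWith d s K = 0 := by
  refine le_antisymm (ENNReal.le_of_forall_pos_le_add fun ε hε _ => ?_) zero_le
  obtain ⟨c, r, hr, hcov, hsum⟩ := exists_cover_of_hContentWith_lt
    (h.trans_lt (lt_min (by exact_mod_cast hε) one_pos : (0 : ℝ≥0∞) < min (ε : ℝ≥0∞) 1))
  have hr1 : ∀ n, r n < 1 := fun n => by
    have : r n ^ t < 1 := by
      simpa using (ENNReal.le_tsum n).trans_lt (hsum.trans_le (min_le_right _ _))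
    rcases (Real.rpow_lt_one_iff_of_pos (hr n)).1 this with ⟨-, ht'⟩ | ⟨h1, -⟩
    exacts [absurd ht' (not_lt.2 ht), h1]
  calc hContentWith d s K ≤ ∑' n, ENNReal.ofReal (r n ^ s) := hContentWith_le hr hcov
    _ ≤ ∑' n, ENNReal.ofReal (r n ^ t) := ENNReal.tsum_le_tsum fun n =>
        ENNReal.ofReal_le_ofReal (Real.rpow_le_rpow_of_exponent_ge (hr n) (hr1 n).le hts)
    _ ≤ 0 + ε := by rw [zero_add]; exact hsum.le.trans (min_le_left _ _)

theorem le_dimWith {q s : ℝ} (hs : 0 ≤ s) (hsK : hContentWith d s K = 0)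
    (hq : hContentWith d q K ≠ 0) : q ≤ dimWith d K :=
  le_csInf ⟨s, hs, hsK⟩ fun _ ⟨ht, htK⟩ =>
    le_of_not_gt fun htq => hq (hContentWith_eq_zero_of_le ht htq.le htK)

theorem measure_div_le_hContentWith [MeasurableSpace X] (μ : Measure X) {q : ℝ} {C : ℝ≥0∞}
    (hball : ∀ c r, 0 < r → μ {y | d c y < r} ≤ C * ENNReal.ofReal (r ^ q)) :
    μ K / C ≤ hContentWith d q K := by
  refine le_iInf₂ fun c r => le_iInf fun ⟨hr, hcov⟩ => ENNReal.div_le_of_le_mul ?_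
  calc μ K ≤ ∑' n, μ {y | d (c n) y < r n} := (measure_mono hcov).trans (measure_iUnion_le _)
    _ ≤ ∑' n, C * ENNReal.ofReal (r n ^ q) := ENNReal.tsum_le_tsum fun n => hball _ _ (hr n)
    _ = _ := by rw [ENNReal.tsum_mul_left, mul_comm]

end HausdorffContent

theorem tsum_inv_two_pow_sub (N : ℕ) : ∑' n, (2⁻¹ : ℝ≥0∞) ^ (n - N) = N + 2 := by
  rw [← ENNReal.summable.sum_add_tsum_nat_add' (k := N), Finset.sum_congr rfl (g := fun _ => 1)
    fun i hi => by rw [Nat.sub_eq_zero_of_le (Finset.mem_range.1 hi).le, pow_zero]]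
  simp [ENNReal.tsum_geometric, ENNReal.one_sub_inv_two]

section DominatedContent

variable {X : Type*} [Nonempty X] {d : X → X → ℝ} {K : Set X} {F : X → ℝ} {L : ℝ}

/-- Cut the range `[0, L]` of `F` into `N` intervals of length `ρ = (L + 1) / N`; one ball of
radius `ρ` per interval covers, and the remaining balls are taken geometrically small. -/
theorem hContentWith_two_le_of_dist_le_abs_sub (hd : ∀ x y, d x y ≤ |F x - F y|)
    (hF : ∀ x, F x ∈ Set.Icc 0 L) {N : ℕ} (hN : 0 < N) :
    hContentWith d 2 K ≤ (N + 2) * ENNReal.ofReal (((L + 1) / N) ^ 2) := by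
  have hL : 0 ≤ L := (hF (Classical.arbitrary X)).1.trans (hF _).2
  set ρ := (L + 1) / N
  have hρ : 0 < ρ := by positivity
  have hcell : ∀ k : ℕ, ∃ c : X, ∀ y ∈ K, ⌊F y / ρ⌋₊ = k → ⌊F c / ρ⌋₊ = k := fun k => by
    by_cases h : ∃ y ∈ K, ⌊F y / ρ⌋₊ = k
    · obtain ⟨y, -, hy⟩ := h
      exact ⟨y, fun _ _ _ => hy⟩
    · exact ⟨Classical.arbitrary X, fun y hy hk => absurd ⟨y, hy, hk⟩ h⟩
  choose c hc using hcell
  have hfloor : ∀ x, (⌊F x / ρ⌋₊ : ℝ) * ρ ≤ F x ∧ F x < (⌊F x / ρ⌋₊ + 1) * ρ := fun x => by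
    have := (Nat.floor_eq_iff (div_nonneg (hF x).1 hρ.le)).1 rfl
    rwa [le_div_iff₀ hρ, div_lt_iff₀ hρ] at this
  refine (hContentWith_le (c := c) (r := fun n => ρ * 2⁻¹ ^ (n - N)) (fun n => by positivity)
    fun y hy => Set.mem_iUnion.2 ⟨⌊F y / ρ⌋₊, ?_⟩).trans ?_
  · have hkN : ⌊F y / ρ⌋₊ < N := by
      rw [Nat.floor_lt (div_nonneg (hF y).1 hρ.le), div_lt_iff₀ hρ,
        show (N : ℝ) * ρ = L + 1 from mul_div_cancel₀ _ (by positivity)]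
      linarith [(hF y).2]
    have hcy := hfloor (c ⌊F y / ρ⌋₊)
    rw [hc _ y hy rfl] at hcy
    simp only [Set.mem_ofPred_eq, Nat.sub_eq_zero_of_le hkN.le, pow_zero, mul_one]
    refine (hd _ _).trans_lt (abs_sub_lt_iff.2 ⟨?_, ?_⟩) <;> linarith [hfloor y]
  · calc ∑' n, ENNReal.ofReal ((ρ * 2⁻¹ ^ (n - N)) ^ (2 : ℝ))
        ≤ ∑' n, ENNReal.ofReal (ρ ^ 2) * 2⁻¹ ^ (n - N) := ENNReal.tsum_le_tsum fun n => by
          have h2 : (0 : ℝ) ≤ 2⁻¹ ^ (n - N) := by positivity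
          have h1 : (2⁻¹ : ℝ) ^ (n - N) ≤ 1 := pow_le_one₀ (by norm_num) (by norm_num)
          have h2' : (2⁻¹ : ℝ≥0∞) ^ (n - N) = ENNReal.ofReal (2⁻¹ ^ (n - N)) := by
            rw [ENNReal.ofReal_pow (by norm_num), ENNReal.ofReal_inv_of_pos two_pos,
              ENNReal.ofReal_ofNat]
          rw [Real.rpow_two, mul_pow, ENNReal.ofReal_mul (by positivity), h2']
          gcongr
          nlinarith
      _ = (N + 2) * ENNReal.ofReal (ρ ^ 2) := by
        rw [ENNReal.tsum_mul_left, tsum_inv_two_pow_sub, mul_comm]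

theorem hContentWith_two_eq_zero_of_dist_le_abs_sub (hd : ∀ x y, d x y ≤ |F x - F y|)
    (hF : ∀ x, F x ∈ Set.Icc 0 L) : hContentWith d 2 K = 0 := by
  have hlim := ENNReal.tendsto_ofReal (tendsto_const_div_atTop_nhds_zero_nat (3 * (L + 1) ^ 2))
  rw [ENNReal.ofReal_zero] at hlim
  refine le_antisymm (ge_of_tendsto hlim ?_) zero_le
  filter_upwards [Filter.eventually_gt_atTop 0] with N hN
  refine (hContentWith_two_le_of_dist_le_abs_sub hd hF hN).trans ?_
  have hL : 0 ≤ L := (hF (Classical.arbitrary X)).1.trans (hF _).2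
  have hN' : (1 : ℝ) ≤ N := by exact_mod_cast hN
  rw [show (N + 2 : ℝ≥0∞) = ENNReal.ofReal (N + 2) by norm_cast,
    ← ENNReal.ofReal_mul (by positivity)]
  refine ENNReal.ofReal_le_ofReal ?_
  rw [div_pow, mul_div_assoc', div_le_div_iff₀ (by positivity) (by positivity)]
  nlinarith [sq_nonneg (L + 1), mul_nonneg (sq_nonneg (L + 1)) (sub_nonneg.2 hN')]

end DominatedContent

section Frostman

variable {X : Type*} [MeasurableSpace X] {μ : Measure X} {d : X → X → ℝ} {q : ℝ}

noncomputable def potentialWith (d : X → X → ℝ) (q : ℝ) (μ : Measure X) (x : X) : ℝ≥0∞ :=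
  ∫⁻ y, ENNReal.ofReal (d x y) ^ (-q) ∂μ

theorem measurable_potentialWith [SFinite μ] (hd : Measurable (Function.uncurry d)) :
    Measurable (potentialWith d q μ) :=
  (hd.ennreal_ofReal.pow_const _).lintegral_prod_right'

theorem exists_nat_measure_setOf_le_ne_zero {f : X → ℝ≥0∞} (hf : AEMeasurable f μ)
    (hint : ∫⁻ x, f x ∂μ ≠ ∞) (hμ : μ ≠ 0) : ∃ n : ℕ, μ {x | f x ≤ n} ≠ 0 := by
  by_contra! h
  refine hμ (ae_eq_bot.1 (Filter.eventually_false_iff_eq_bot.1 ?_))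
  filter_upwards [ae_lt_top' hf hint,
    ae_all_iff.2 fun n => measure_eq_zero_iff_ae_notMem.1 (h n)] with x hx hn
  obtain ⟨n, hn'⟩ := ENNReal.exists_nat_gt hx.ne
  exact hn n hn'.le

theorem measure_setOf_le_le_potentialWith_mul {x : X} (hdx : Measurable (d x)) (hq : 0 ≤ q)
    {ρ : ℝ} (hρ : 0 < ρ) :
    μ {y | d x y ≤ ρ} ≤ potentialWith d q μ x * ENNReal.ofReal (ρ ^ q) := by
  set ε := ENNReal.ofReal ρ ^ (-q)
  have hρ0 : ENNReal.ofReal ρ ≠ 0 := (ENNReal.ofReal_pos.2 hρ).ne'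
  have hmarkov : ε * μ {y | d x y ≤ ρ} ≤ potentialWith d q μ x := by
    refine le_trans ?_ (mul_meas_ge_le_lintegral₀ (hdx.ennreal_ofReal.pow_const _).aemeasurable ε)
    refine mul_le_mul_right (measure_mono fun y (hy : d x y ≤ ρ) => ?_) ε
    simp only [Set.mem_ofPred_eq, ε, ENNReal.rpow_neg]
    exact ENNReal.inv_le_inv' (ENNReal.rpow_le_rpow (ENNReal.ofReal_le_ofReal hy) hq)
  calc μ {y | d x y ≤ ρ} = ENNReal.ofReal ρ ^ q * (ε * μ {y | d x y ≤ ρ}) := by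
        rw [← mul_assoc, ← ENNReal.rpow_add _ _ hρ0 ENNReal.ofReal_ne_top, add_neg_cancel,
          ENNReal.rpow_zero, one_mul]
    _ ≤ ENNReal.ofReal ρ ^ q * potentialWith d q μ x := by gcongr
    _ = _ := by rw [mul_comm, ENNReal.ofReal_rpow_of_pos hρ]

/-- A `d`-ball of radius `r` meeting `S` lies in the closed ball of radius `2r` around a point of
`S`, whose mass is controlled by the potential at that point. -/
theorem measure_ball_inter_le_of_potentialWith_le (hd : ∀ x, Measurable (d x))
    (hsymm : ∀ x y, d x y = d y x) (htri : ∀ x y z, d x z ≤ d x y + d y z) (hq : 0 ≤ q)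
    {S : Set X} {C : ℝ≥0∞} (hS : ∀ x ∈ S, potentialWith d q μ x ≤ C) (c : X) {r : ℝ}
    (hr : 0 < r) :
    μ ({y | d c y < r} ∩ S) ≤ C * ENNReal.ofReal (2 ^ q) * ENNReal.ofReal (r ^ q) := by
  rcases ({y | d c y < r} ∩ S).eq_empty_or_nonempty with h | ⟨x, hxc, hxS⟩
  · simp [h]
  calc μ ({y | d c y < r} ∩ S) ≤ μ {y | d x y ≤ 2 * r} := measure_mono fun y hy => by
        have hcx : d c x < r := hxc
        have hcy : d c y < r := hy.1
        show d x y ≤ 2 * r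
        linarith [htri x c y, hsymm x c]
    _ ≤ potentialWith d q μ x * ENNReal.ofReal ((2 * r) ^ q) :=
        measure_setOf_le_le_potentialWith_mul (hd x) hq (by positivity)
    _ ≤ C * ENNReal.ofReal (2 ^ q) * ENNReal.ofReal (r ^ q) := by
        rw [Real.mul_rpow zero_le_two hr.le, ENNReal.ofReal_mul (by positivity), ← mul_assoc]
        gcongr
        exact hS x hxS

theorem hContentWith_ne_zero_of_lintegral_potentialWith_ne_top [SFinite μ] {K : Set X}
    (hd : Measurable (Function.uncurry d)) (hsymm : ∀ x y, d x y = d y x)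
    (htri : ∀ x y z, d x z ≤ d x y + d y z) (hq : 0 ≤ q) (hμ : μ ≠ 0) (hK : μ Kᶜ = 0)
    (henergy : ∫⁻ x, potentialWith d q μ x ∂μ ≠ ∞) :
    hContentWith d q K ≠ 0 := by
  have hpot : Measurable (potentialWith d q μ) := measurable_potentialWith hd
  obtain ⟨n, hn⟩ := exists_nat_measure_setOf_le_ne_zero hpot.aemeasurable henergy hμ
  set S := {x | potentialWith d q μ x ≤ n}
  have hS : MeasurableSet S := measurableSet_le hpot measurable_const
  have hKS : μ.restrict S K ≠ 0 := by
    rw [Measure.restrict_apply' hS]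
    refine fun h => hn (measure_mono_null (fun x hx => ?_) (measure_union_null h hK))
    by_cases hxK : x ∈ K
    exacts [Or.inl ⟨hxK, hx⟩, Or.inr hxK]
  have hmass := measure_div_le_hContentWith (d := d) (μ.restrict S) (K := K) fun c r hr => by
    rw [Measure.restrict_apply' hS]
    exact measure_ball_inter_le_of_potentialWith_le (fun x => hd.comp measurable_prodMk_left)
      hsymm htri hq (fun _ hx => hx) c hr
  intro h0
  rw [h0, nonpos_iff_eq_zero, ENNReal.div_eq_zero_iff] at hmass
  exact hmass.elim hKS (ENNReal.mul_ne_top (ENNReal.natCast_ne_top n) ENNReal.ofReal_ne_top)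

end Frostman

section MeasureDistance

variable (m : Measure ℝ) [IsFiniteMeasure m]

theorem toReal_measure_uIcc_le_add (x y z : ℝ) :
    (m (Set.uIcc x z)).toReal ≤ (m (Set.uIcc x y)).toReal + (m (Set.uIcc y z)).toReal := by
  rw [← ENNReal.toReal_add (measure_ne_top _ _) (measure_ne_top _ _)]
  exact ENNReal.toReal_mono (by finiteness)
    ((measure_mono Set.uIcc_subset_uIcc_union_uIcc).trans (measure_union_le _ _))

theorem toReal_measure_uIcc_eq_abs_sub [NullSingletonClass m] (x y : ℝ) :
    (m (Set.uIcc x y)).toReal = |(m (Set.Iic x)).toReal - (m (Set.Iic y)).toReal| := by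
  wlog hxy : x ≤ y generalizing x y
  · rw [Set.uIcc_comm, abs_sub_comm]
    exact this y x (le_of_not_ge hxy)
  have hmono : m (Set.Iic x) ≤ m (Set.Iic y) := measure_mono (Set.Iic_subset_Iic.2 hxy)
  rw [Set.uIcc_of_le hxy, ← measure_congr Ioc_ae_eq_Icc, ← Set.Iic_sdiff_Iic,
    measure_sdiff (Set.Iic_subset_Iic.2 hxy) nullMeasurableSet_Iic (measure_ne_top _ _),
    ENNReal.toReal_sub_of_le hmono (measure_ne_top _ _), abs_sub_comm,
    abs_of_nonneg (sub_nonneg.2 (ENNReal.toReal_mono (measure_ne_top _ _) hmono))]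

theorem hContentWith_two_toReal_measure_uIcc_eq_zero [NullSingletonClass m] (K : Set ℝ) :
    hContentWith (fun x y => (m (Set.uIcc x y)).toReal) 2 K = 0 :=
  hContentWith_two_eq_zero_of_dist_le_abs_sub (F := fun x => (m (Set.Iic x)).toReal)
    (L := (m Set.univ).toReal) (fun x y => (toReal_measure_uIcc_eq_abs_sub m x y).le)
    fun _ => ⟨ENNReal.toReal_nonneg,
      ENNReal.toReal_mono (measure_ne_top _ _) (measure_mono (Set.subset_univ _))⟩

end MeasureDistance

section MeasurableFamilies

open ProbabilityTheory

variable {α β : Type*} [MeasurableSpace α] [MeasurableSpace β]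

/-- Split `α` according to `⌊κ a (univ)⌋₊`: on each piece `κ` is a finite kernel. -/
theorem ProbabilityTheory.Kernel.isSFiniteKernel_of_isFiniteMeasure (κ : Kernel α β)
    [∀ a, IsFiniteMeasure (κ a)] : IsSFiniteKernel κ := by
  classical
  set level : α → ℕ := fun a => ⌊(κ a Set.univ).toReal⌋₊
  have hlevel : Measurable level := (κ.measurable_coe MeasurableSet.univ).ennreal_toReal.nat_floor
  set κs : ℕ → Kernel α β := fun n => piecewise (hlevel (measurableSet_singleton n)) κ 0
  have hκs : ∀ n, IsFiniteKernel (κs n) := fun n => ⟨⟨n + 1, by finiteness, fun a => by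
    by_cases ha : level a = n
    · simp only [κs, piecewise_apply, Set.mem_preimage, Set.mem_singleton_iff, ha, if_true]
      rw [← ENNReal.ofReal_toReal (measure_ne_top (κ a) _), ← ha]
      exact_mod_cast ENNReal.ofReal_le_ofReal (Nat.lt_floor_add_one _).le
    · simp [κs, piecewise_apply, ha]⟩⟩
  have hsum : κ = Kernel.sum κs := by
    ext a s hs
    rw [Kernel.sum_apply' _ _ hs, tsum_eq_single (level a) fun n hn => by
      simp [κs, piecewise_apply', Ne.symm hn]]
    simp [κs, piecewise_apply']
  rw [hsum]
  exact Kernel.isSFiniteKernel_sum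

theorem measurable_measure_uIcc {M : α → Measure ℝ} [∀ a, IsFiniteMeasure (M a)]
    (hM : ∀ s, MeasurableSet s → Measurable fun a => M a s) :
    Measurable fun p : α × ℝ × ℝ => M p.1 (Set.uIcc p.2.1 p.2.2) := by
  let κ : Kernel (α × ℝ × ℝ) ℝ :=
    Kernel.prodMkRight (ℝ × ℝ) ⟨M, Measure.measurable_of_measurable_coe M hM⟩
  have hκ : ∀ p, IsFiniteMeasure (κ p) := fun p => ‹∀ a, IsFiniteMeasure (M a)› p.1
  refine Kernel.measurable_kernel_prodMk_left_of_finite (κ := κ)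
    (t := {q | q.1.2.1 ⊓ q.1.2.2 ≤ q.2 ∧ q.2 ≤ q.1.2.1 ⊔ q.1.2.2}) ?_ hκ
  have hmin : Measurable fun q : (α × ℝ × ℝ) × ℝ => q.1.2.1 ⊓ q.1.2.2 := by fun_prop
  have hmax : Measurable fun q : (α × ℝ × ℝ) × ℝ => q.1.2.1 ⊔ q.1.2.2 := by fun_prop
  exact (measurableSet_le hmin measurable_snd).inter (measurableSet_le measurable_snd hmax)

theorem measurable_lintegral_lintegral {ν : α → Measure β} [∀ a, IsFiniteMeasure (ν a)]
    (hν : ∀ s, MeasurableSet s → Measurable fun a => ν a s) {f : α × β × β → ℝ≥0∞}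
    (hf : Measurable f) : Measurable fun a => ∫⁻ x, ∫⁻ y, f (a, x, y) ∂ν a ∂ν a := by
  let κ : Kernel α β := ⟨ν, Measure.measurable_of_measurable_coe ν hν⟩
  have : ∀ a, IsFiniteMeasure (κ a) := ‹∀ a, IsFiniteMeasure (ν a)›
  have : IsSFiniteKernel κ := κ.isSFiniteKernel_of_isFiniteMeasure
  have hinner : Measurable fun p : α × β => ∫⁻ y, f (p.1, p.2, y) ∂κ p.1 :=
    Measurable.lintegral_kernel_prod_right' (κ := Kernel.prodMkRight β κ)
      (f := fun q => f (q.1.1, q.1.2, q.2)) (by fun_prop)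
  exact hinner.lintegral_kernel_prod_right' (κ := κ)

end MeasurableFamilies

theorem dim_random_metric_ge_general
    {Ω : Type*} [MeasurableSpace Ω] (ℙ : Measure Ω)
    (T : ℝ)
    (M : Ω → Measure ℝ)
    (hMfin : ∀ ω, M ω Set.univ < ⊤)
    (hMatom : ∀ ω, ∀ x : ℝ, M ω {x} = 0)
    (hMmeas : ∀ A : Set ℝ, MeasurableSet A → Measurable fun ω => M ω A)
    (K : Set ℝ)
    (q : ℝ) (hq : q ∈ Set.Ioc (0 : ℝ) 1)
    (ν : Ω → Measure ℝ)
    (hνfin : ∀ ω, ν ω Set.univ < ⊤)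
    (hνmeas : ∀ A : Set ℝ, MeasurableSet A → Measurable fun ω => ν ω A)
    (hνK : ∀ᵐ ω ∂ℙ, ν ω (Set.Icc 0 T \ K) = 0 ∧ 0 < ν ω (Set.Icc 0 T))
    (henergy :
      ∫⁻ ω, ∫⁻ x in Set.Icc (0 : ℝ) T, ∫⁻ y in Set.Icc (0 : ℝ) T,
          (M ω (Set.Icc (min x y) (max x y))) ^ (-q) ∂(ν ω) ∂(ν ω) ∂ℙ < ⊤) :
    ∀ᵐ ω ∂ℙ,
      q ≤ dimWith (fun x y => (M ω (Set.Icc (min x y) (max x y))).toReal) K := by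
  have (ω : Ω) : IsFiniteMeasure (M ω) := ⟨hMfin ω⟩
  have (ω : Ω) : NullSingletonClass (M ω) := ⟨hMatom ω⟩
  have (ω : Ω) : IsFiniteMeasure (ν ω) := ⟨hνfin ω⟩
  have hdist := measurable_measure_uIcc hMmeas
  have henergy_meas := measurable_lintegral_lintegral
    (ν := fun ω => (ν ω).restrict (Set.Icc 0 T)) (fun s hs => by
      simpa only [Measure.restrict_apply hs] using hνmeas _ (hs.inter measurableSet_Icc))
    (hdist.pow_const (-q))
  filter_upwards [hνK, ae_lt_top henergy_meas henergy.ne] with ω ⟨hνK, hνpos⟩ hEω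
  refine le_dimWith zero_le_two (hContentWith_two_toReal_measure_uIcc_eq_zero (M ω) K)
    (hContentWith_ne_zero_of_lintegral_potentialWith_ne_top (μ := (ν ω).restrict (Set.Icc 0 T))
      (hdist.comp measurable_prodMk_left).ennreal_toReal (fun x y => by rw [min_comm, max_comm])
      (toReal_measure_uIcc_le_add (M ω)) hq.1.le ?_ ?_ ?_)
  · rwa [Ne, ← Measure.measure_univ_eq_zero, Measure.restrict_apply_univ, ← Ne,
      ← pos_iff_ne_zero]
  · rwa [Measure.restrict_apply' measurableSet_Icc, ← Set.sdiff_eq_compl_inter]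
  · simp only [potentialWith, ENNReal.ofReal_toReal (measure_ne_top _ _)]
    exact hEω.ne

/-- **Frostman-type lower bound in the random metric.**
Let `ω ↦ M ω` be a measurable family of finite atomless Borel measures on `[0,T]`,
inducing pseudometrics `d_ω(x,y) = M_ω([min(x,y), max(x,y)])`, let `K ⊆ [0,T]` be Borel
and `q ∈ (0,1]`. If there is a measurable family `ω ↦ ν ω` of finite Borel measures on
`[0,T]` such that a.s. `ν_ω` is supported by `K` and nonzero, and whose expected
`q`-energy (with respect to `d_ω`) is finite, then `ℙ`-a.s. the Hausdorff dimension of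
`K` with respect to `d_ω` is at least `q`. -/
theorem dim_random_metric_ge
    {Ω : Type*} [MeasurableSpace Ω] (ℙ : Measure Ω) [IsProbabilityMeasure ℙ]
    (T : ℝ) (hT : 0 < T)
    (M : Ω → Measure ℝ)
    (hMfin : ∀ ω, M ω Set.univ < ⊤)
    (hMsupp : ∀ ω, M ω (Set.Icc 0 T)ᶜ = 0)
    (hMatom : ∀ ω, ∀ x : ℝ, M ω {x} = 0)
    (hMmeas : ∀ A : Set ℝ, MeasurableSet A → Measurable fun ω => M ω A)
    (K : Set ℝ) (hK : K ⊆ Set.Icc 0 T) (hKmeas : MeasurableSet K)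
    (q : ℝ) (hq : q ∈ Set.Ioc (0 : ℝ) 1)
    (ν : Ω → Measure ℝ)
    (hνfin : ∀ ω, ν ω Set.univ < ⊤)
    (hνmeas : ∀ A : Set ℝ, MeasurableSet A → Measurable fun ω => ν ω A)
    (hνK : ∀ᵐ ω ∂ℙ, ν ω (Set.Icc 0 T \ K) = 0 ∧ 0 < ν ω (Set.Icc 0 T))
    (henergy :
      ∫⁻ ω, ∫⁻ x in Set.Icc (0 : ℝ) T, ∫⁻ y in Set.Icc (0 : ℝ) T,
          (M ω (Set.Icc (min x y) (max x y))) ^ (-q) ∂(ν ω) ∂(ν ω) ∂ℙ < ⊤) :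
    ∀ᵐ ω ∂ℙ,
      q ≤ dimWith (fun x y => (M ω (Set.Icc (min x y) (max x y))).toReal) K :=
  dim_random_metric_ge_general ℙ T M hMfin hMatom hMmeas K q hq ν hνfin hνmeas hνK henergy
end

section
/- Let (Ω, ℱ, ℙ) be a probability space, R > 0, and ω ↦ M_ω a measurable family of finite Borel measures on ℝ². Let q ∈ (0,1], s > 0 and C > 0 be such that ∫_Ω M_ω(B(x,r))^q ℙ(dω) ≤ C r^s for every x ∈ B(0,R) and every 0 < r ≤ R, where B(x,r) denotes the Euclidean ball. If K ⊆ B(0,R) has Euclidean Hausdorff dimension strictly less than s, then ℙ-almost surely, for every ε > 0 there is a countable cover of K by balls B(x_i, r_i) with x_i ∈ B(0,R), 0 < r_i ≤ R, such that ∑_i M_ω(B(x_i,r_i))^q ≤ ε; in particular the M_ω-Hausdorff dimension of K is at most q almost surely. -/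
/-!
Since `dimH K < s`, the `s`-dimensional Hausdorff measure of `K` vanishes, so for every `k` the
set `K` has a cover by balls `B(xᵢ, rᵢ)` with `∑ᵢ rᵢ ^ s ≤ 2⁻ᵏ`. By the moment bound, the random
cover sum `Yₖ = ∑ᵢ M(B(xᵢ, rᵢ)) ^ q` has `E[Yₖ] ≤ C 2⁻ᵏ`; hence `∑ₖ Yₖ` has finite expectation,
is almost surely finite, and `Yₖ → 0` almost surely. These covers make `C^q_M(K) = 0`.
-/

open MeasureTheory Metric
open scoped ENNReal

/-- The generalized `t`-dimensional Hausdorff content of `K` with respect to a Borel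
measure `m` on `ℝ²`: the infimum of `∑ᵢ m(B(xᵢ,rᵢ))^t` over countable covers of `K` by
Euclidean balls `B(xᵢ,rᵢ)` of radii `rᵢ > 0`. -/
noncomputable def mContent (m : Measure (EuclideanSpace ℝ (Fin 2))) (t : ℝ)
    (K : Set (EuclideanSpace ℝ (Fin 2))) : ℝ≥0∞ :=
  ⨅ (c : ℕ → EuclideanSpace ℝ (Fin 2)) (r : ℕ → ℝ)
    (_ : (∀ n, 0 < r n) ∧ K ⊆ ⋃ n, Metric.ball (c n) (r n)),
    ∑' n, (m (Metric.ball (c n) (r n))) ^ t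

/-- The Hausdorff dimension of `K` with respect to the measure `m`:
`inf {t ≥ 0 : C^t_m(K) = 0}`. -/
noncomputable def mDim (m : Measure (EuclideanSpace ℝ (Fin 2)))
    (K : Set (EuclideanSpace ℝ (Fin 2))) : ℝ :=
  sInf {t : ℝ | 0 ≤ t ∧ mContent m t K = 0}

open Filter Topology

lemma exists_gt_ofReal_rpow_lt {s d R : ℝ} (hs : 0 ≤ s) (hdR : d < R) {ε : ℝ≥0∞}
    (hε : 0 < ε) : ∃ r, d < r ∧ r ≤ R ∧ ENNReal.ofReal r ^ s < ENNReal.ofReal d ^ s + ε := by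
  have hcont : ContinuousAt (fun r : ℝ => ENNReal.ofReal r ^ s) d :=
    (ENNReal.continuous_rpow_const.comp ENNReal.continuous_ofReal).continuousAt
  have hlt : ENNReal.ofReal d ^ s < ENNReal.ofReal d ^ s + ε :=
    ENNReal.lt_add_right (ENNReal.rpow_ne_top_of_nonneg hs ENNReal.ofReal_ne_top) hε.ne'
  obtain ⟨r, hr, hdr, hrR⟩ := (((hcont.tendsto.mono_left nhdsWithin_le_nhds).eventually
    (gt_mem_nhds hlt)).and (Ioc_mem_nhdsGT hdR)).exists
  exact ⟨r, hdr, hrR, hr⟩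

section Covers

variable {X : Type*}

lemma exists_ball_superset_inter_rpow_lt [PseudoMetricSpace X] {K U t : Set X} (hKU : K ⊆ U)
    (hU : U.Nonempty) {s R : ℝ} (hs : 0 ≤ s) (ht : ediam t < ENNReal.ofReal R) {ε : ℝ≥0∞}
    (hε : 0 < ε) : ∃ x ∈ U, ∃ r, 0 < r ∧ r ≤ R ∧ K ∩ t ⊆ ball x r ∧
      ENNReal.ofReal r ^ s < ediam t ^ s + ε := by
  have ht_ne_top : ediam t ≠ ∞ := ne_top_of_lt ht
  obtain ⟨r, hdr, hrR, hrs⟩ :=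
    exists_gt_ofReal_rpow_lt hs (ENNReal.toReal_lt_of_lt_ofReal ht) hε
  rw [ENNReal.ofReal_toReal ht_ne_top] at hrs
  have hr : 0 < r := ENNReal.toReal_nonneg.trans_lt hdr
  rcases (K ∩ t).eq_empty_or_nonempty with hempty | ⟨x, hxK, hxt⟩
  · obtain ⟨x, hx⟩ := hU
    exact ⟨x, hx, r, hr, hrR, hempty ▸ Set.empty_subset _, hrs⟩
  · refine ⟨x, hKU hxK, r, hr, hrR, fun z hz => ?_, hrs⟩
    exact (dist_le_diam_of_mem' ht_ne_top hz.2 hxt).trans_lt hdr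

lemma pos_of_dimH_lt_ofReal [EMetricSpace X] {K : Set X} {s : ℝ}
    (hdim : dimH K < ENNReal.ofReal s) : 0 < s :=
  ENNReal.ofReal_pos.1 (zero_le.trans_lt hdim)

lemma exists_cover_tsum_ediam_rpow_lt [EMetricSpace X] [MeasurableSpace X] [BorelSpace X]
    {K : Set X} {s : ℝ} (hdim : dimH K < ENNReal.ofReal s)
    {ρ δ : ℝ≥0∞} (hρ : 0 < ρ) (hδ : 0 < δ) :
    ∃ t : ℕ → Set X, K ⊆ ⋃ n, t n ∧ (∀ n, ediam (t n) ≤ ρ) ∧ ∑' n, ediam (t n) ^ s < δ := by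
  have hs := pos_of_dimH_lt_ofReal hdim
  have hμ : μH[s] K = 0 := by
    simpa [Real.coe_toNNReal s hs.le] using hausdorffMeasure_of_dimH_lt hdim
  have hinf : (⨅ (t : ℕ → Set X) (_ : K ⊆ ⋃ n, t n) (_ : ∀ n, ediam (t n) ≤ ρ),
      ∑' n, ⨆ _ : (t n).Nonempty, ediam (t n) ^ s) < δ := by
    refine lt_of_le_of_lt ?_ (hμ ▸ hδ)
    rw [Measure.hausdorffMeasure_apply]
    exact le_iSup₂_of_le ρ hρ le_rfl
  simp only [iInf_lt_iff] at hinf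
  obtain ⟨t, hKt, htρ, htδ⟩ := hinf
  refine ⟨t, hKt, htρ, htδ.trans_eq' (tsum_congr fun n => ?_)⟩
  rcases (t n).eq_empty_or_nonempty with h | h <;> simp [h, hs]

theorem exists_ball_cover_tsum_rpow_le [MetricSpace X] [MeasurableSpace X] [BorelSpace X]
    {K U : Set X} (hKU : K ⊆ U) (hU : U.Nonempty) {s R : ℝ} (hdim : dimH K < ENNReal.ofReal s)
    (hR : 0 < R) {δ : ℝ≥0∞} (hδ : 0 < δ) : ∃ (x : ℕ → X) (r : ℕ → ℝ), (∀ n, x n ∈ U) ∧ (∀ n, 0 < r n ∧ r n ≤ R) ∧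
      K ⊆ ⋃ n, ball (x n) (r n) ∧ ∑' n, ENNReal.ofReal (r n) ^ s ≤ δ := by
  have hs := pos_of_dimH_lt_ofReal hdim
  obtain ⟨t, hKt, htR, htδ⟩ := exists_cover_tsum_ediam_rpow_lt hdim
    (ENNReal.ofReal_pos.2 (half_pos hR)) (ENNReal.half_pos hδ.ne')
  obtain ⟨ε, hε, hεδ⟩ := ENNReal.exists_pos_sum_of_countable (ENNReal.half_pos hδ.ne').ne' ℕ
  have htR' n : ediam (t n) < ENNReal.ofReal R :=
    (htR n).trans_lt (ENNReal.ofReal_lt_ofReal_iff'.2 ⟨half_lt_self hR, hR⟩)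
  choose x hxU r hr hrR hball hrs using fun n =>
    exists_ball_superset_inter_rpow_lt hKU hU hs.le (htR' n) (ENNReal.coe_pos.2 (hε n))
  refine ⟨x, r, hxU, fun n => ⟨hr n, hrR n⟩, fun z hz => ?_, ?_⟩
  · obtain ⟨n, hn⟩ := Set.mem_iUnion.1 (hKt hz)
    exact Set.mem_iUnion.2 ⟨n, hball n ⟨hz, hn⟩⟩
  · calc ∑' n, ENNReal.ofReal (r n) ^ s ≤ ∑' n, (ediam (t n) ^ s + ε n) :=
          ENNReal.tsum_le_tsum fun n => (hrs n).le
      _ = ∑' n, ediam (t n) ^ s + ∑' n, (ε n : ℝ≥0∞) := ENNReal.tsum_add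
      _ ≤ δ / 2 + δ / 2 := add_le_add htδ.le hεδ.le
      _ = δ := ENNReal.add_halves δ

end Covers

lemma ae_tendsto_zero_of_tsum_lintegral_ne_top {Ω : Type*} [MeasurableSpace Ω] {μ : Measure Ω}
    {Y : ℕ → Ω → ℝ≥0∞} (hY : ∀ k, AEMeasurable (Y k) μ) (h : ∑' k, ∫⁻ ω, Y k ω ∂μ ≠ ∞) :
    ∀ᵐ ω ∂μ, Tendsto (fun k => Y k ω) atTop (𝓝 0) := by
  rw [← lintegral_tsum hY] at h
  filter_upwards [ae_lt_top' (AEMeasurable.tsum hY) h] with ω hω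
  exact ENNReal.tendsto_atTop_zero_of_tsum_ne_top hω.ne

lemma lintegral_tsum_measure_ball_rpow_le {Ω X : Type*} [MeasurableSpace Ω] [PseudoMetricSpace X]
    [MeasurableSpace X] [OpensMeasurableSpace X] {μ : Measure Ω} {M : Ω → Measure X}
    (hM : ∀ A, MeasurableSet A → Measurable fun ω => M ω A) {U : Set X} {q s C R : ℝ}
    (hmom : ∀ x ∈ U, ∀ r : ℝ, 0 < r → r ≤ R →
      ∫⁻ ω, M ω (ball x r) ^ q ∂μ ≤ ENNReal.ofReal (C * r ^ s))
    {x : ℕ → X} {r : ℕ → ℝ} (hx : ∀ n, x n ∈ U) (hr : ∀ n, 0 < r n ∧ r n ≤ R) :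
    ∫⁻ ω, ∑' n, M ω (ball (x n) (r n)) ^ q ∂μ ≤
      ENNReal.ofReal C * ∑' n, ENNReal.ofReal (r n) ^ s := by
  rw [lintegral_tsum fun n => ((hM _ measurableSet_ball).pow_const q).aemeasurable,
    ← ENNReal.tsum_mul_left]
  refine ENNReal.tsum_le_tsum fun n => (hmom _ (hx n) _ (hr n).1 (hr n).2).trans_eq ?_
  rw [ENNReal.ofReal_mul' (Real.rpow_nonneg (hr n).1.le _), ENNReal.ofReal_rpow_of_pos (hr n).1]

section MeasureDimension

variable {m : Measure (EuclideanSpace ℝ (Fin 2))} {t : ℝ} {K : Set (EuclideanSpace ℝ (Fin 2))}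

lemma mContent_le_tsum {c : ℕ → EuclideanSpace ℝ (Fin 2)} {r : ℕ → ℝ}
    (hr : ∀ n, 0 < r n) (hK : K ⊆ ⋃ n, ball (c n) (r n)) :
    mContent m t K ≤ ∑' n, m (ball (c n) (r n)) ^ t :=
  iInf₂_le_of_le c r (iInf_le _ ⟨hr, hK⟩)

lemma mDim_le_of_mContent_eq_zero (ht : 0 ≤ t) (h : mContent m t K = 0) : mDim m K ≤ t :=
  csInf_le ⟨0, fun _ h => h.1⟩ ⟨ht, h⟩

end MeasureDimension

theorem mdim_le_of_moment_bound_general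
    {Ω : Type*} [MeasurableSpace Ω] (ℙ : Measure Ω)
    (R : ℝ) (hR : 0 < R)
    (M : Ω → Measure (EuclideanSpace ℝ (Fin 2)))
    (hmeas : ∀ A : Set (EuclideanSpace ℝ (Fin 2)), MeasurableSet A →
      Measurable fun ω => M ω A)
    (q s C : ℝ) (hq : q ∈ Set.Ioc (0 : ℝ) 1)
    (hmom : ∀ x ∈ Metric.ball (0 : EuclideanSpace ℝ (Fin 2)) R, ∀ r : ℝ, 0 < r → r ≤ R →
      ∫⁻ ω, (M ω (Metric.ball x r)) ^ q ∂ℙ ≤ ENNReal.ofReal (C * r ^ s))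
    (K : Set (EuclideanSpace ℝ (Fin 2)))
    (hK : K ⊆ Metric.ball 0 R) (hdim : dimH K < ENNReal.ofReal s) :
    ∀ᵐ ω ∂ℙ,
      (∀ ε : ℝ, 0 < ε → ∃ (x : ℕ → EuclideanSpace ℝ (Fin 2)) (r : ℕ → ℝ),
        (∀ n, x n ∈ Metric.ball (0 : EuclideanSpace ℝ (Fin 2)) R) ∧
        (∀ n, 0 < r n ∧ r n ≤ R) ∧
        K ⊆ ⋃ n, Metric.ball (x n) (r n) ∧
        ∑' n, (M ω (Metric.ball (x n) (r n))) ^ q ≤ ENNReal.ofReal ε) ∧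
      mDim (M ω) K ≤ q := by
  choose x r hx hr hKx hsum using fun k : ℕ => exists_ball_cover_tsum_rpow_le hK
    (nonempty_ball.2 hR) hdim hR (ENNReal.pow_pos (a := 2⁻¹) (by norm_num) k)
  set Y : ℕ → _ → ℝ≥0∞ := fun k ω => ∑' n, M ω (ball (x k n) (r k n)) ^ q
  have hY_meas k : AEMeasurable (Y k) ℙ :=
    (Measurable.tsum fun n => (hmeas _ measurableSet_ball).pow_const q).aemeasurable
  have hY_int : ∑' k, ∫⁻ ω, Y k ω ∂ℙ ≤ ENNReal.ofReal C * 2 := by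
    calc ∑' k, ∫⁻ ω, Y k ω ∂ℙ ≤ ∑' k : ℕ, ENNReal.ofReal C * 2⁻¹ ^ k :=
          ENNReal.tsum_le_tsum fun k => (lintegral_tsum_measure_ball_rpow_le hmeas hmom (hx k)
            (hr k)).trans (by gcongr; exact hsum k)
      _ = ENNReal.ofReal C * 2 := by
          rw [ENNReal.tsum_mul_left, ENNReal.tsum_geometric, ENNReal.one_sub_inv_two, inv_inv]
  filter_upwards [ae_tendsto_zero_of_tsum_lintegral_ne_top hY_meas
    (ne_top_of_le_ne_top (ENNReal.mul_ne_top ENNReal.ofReal_ne_top ENNReal.ofNat_ne_top) hY_int)]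
    with ω hω
  refine ⟨fun ε hε => ?_, mDim_le_of_mContent_eq_zero hq.1.le ?_⟩
  · obtain ⟨k, hk⟩ := (hω.eventually (eventually_le_nhds (ENNReal.ofReal_pos.2 hε))).exists
    exact ⟨x k, r k, hx k, hr k, hKx k, hk⟩
  · exact nonpos_iff_eq_zero.1
      (ge_of_tendsto' hω fun k => mContent_le_tsum (fun n => (hr k n).1) (hKx k))

/-- **Upper half of the two-dimensional KPZ relation (abstract form).**
Let `ω ↦ M ω` be a measurable family of finite Borel measures on `ℝ²` on a probability
space `(Ω, ℙ)` with `E[M(B(x,r))^q] ≤ C r^s` for all `x ∈ B(0,R)` and `0 < r ≤ R`, where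
`q ∈ (0,1]`, `s > 0`, `C > 0`. If `K ⊆ B(0,R)` has Euclidean Hausdorff dimension `< s`,
then `ℙ`-a.s., for every `ε > 0` there is a countable cover of `K` by balls `B(xᵢ,rᵢ)`
with `xᵢ ∈ B(0,R)` and `0 < rᵢ ≤ R` such that `∑ᵢ M_ω(B(xᵢ,rᵢ))^q ≤ ε`; in particular
the `M_ω`-Hausdorff dimension of `K` is at most `q` almost surely. -/
theorem mdim_le_of_moment_bound
    {Ω : Type*} [MeasurableSpace Ω] (ℙ : Measure Ω) [IsProbabilityMeasure ℙ]
    (R : ℝ) (hR : 0 < R)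
    (M : Ω → Measure (EuclideanSpace ℝ (Fin 2)))
    (hfin : ∀ ω, M ω Set.univ < ⊤)
    (hmeas : ∀ A : Set (EuclideanSpace ℝ (Fin 2)), MeasurableSet A →
      Measurable fun ω => M ω A)
    (q s C : ℝ) (hq : q ∈ Set.Ioc (0 : ℝ) 1) (hs : 0 < s) (hC : 0 < C)
    (hmom : ∀ x ∈ Metric.ball (0 : EuclideanSpace ℝ (Fin 2)) R, ∀ r : ℝ, 0 < r → r ≤ R →
      ∫⁻ ω, (M ω (Metric.ball x r)) ^ q ∂ℙ ≤ ENNReal.ofReal (C * r ^ s))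
    (K : Set (EuclideanSpace ℝ (Fin 2)))
    (hK : K ⊆ Metric.ball 0 R) (hdim : dimH K < ENNReal.ofReal s) :
    ∀ᵐ ω ∂ℙ,
      (∀ ε : ℝ, 0 < ε → ∃ (x : ℕ → EuclideanSpace ℝ (Fin 2)) (r : ℕ → ℝ),
        (∀ n, x n ∈ Metric.ball (0 : EuclideanSpace ℝ (Fin 2)) R) ∧
        (∀ n, 0 < r n ∧ r n ≤ R) ∧
        K ⊆ ⋃ n, Metric.ball (x n) (r n) ∧
        ∑' n, (M ω (Metric.ball (x n) (r n))) ^ q ≤ ENNReal.ofReal ε) ∧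
      mDim (M ω) K ≤ q :=
  mdim_le_of_moment_bound_general ℙ R hR M hmeas q s C hq hmom K hK hdim
end
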